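/- Let ε > 0 be real and n ≥ 3 an integer. If a CQ ε-DP n-tuple (ρ_1,…,ρ_n) of full-rank density matrices satisfies M_n^C(ε;J_θ) < avg_{i≠j} J_θ(ρ_i,ρ_j) for some θ ∈ [0,1], then (ρ_1,…,ρ_n) does not lie in EC_n(ε). -/

import Mathlib

open scoped BigOperators Classical ComplexOrder
open Matrix

noncomputable section

/-- `p` is a probability vector in `ℝ^d`. -/
def IsProbVec {d : ℕ} (p : Fin d → ℝ) : Prop :=
  (∀ k, 0 ≤ p k) ∧ ∑ k, p k = 1

/-- `(p i)_{i=1}^n` is an `ε`-differentially private `n`-tuple of probability vectors. -/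
def IsDP {n d : ℕ} (ε : ℝ) (p : Fin n → Fin d → ℝ) : Prop :=
  (∀ i, IsProbVec (p i)) ∧ ∀ i j k, p i k ≤ Real.exp ε * p j k

/-- Classical RLD Fisher information `J_θ(p,q)`. -/
def Jc {d : ℕ} (θ : ℝ) (p q : Fin d → ℝ) : ℝ :=
  ∑ k, (q k - p k) ^ 2 / ((1 - θ) * p k + θ * q k)

/-- `ρ` is a density matrix on `ℂ^d`. -/
def IsDensityMatrix {d : ℕ} (ρ : Matrix (Fin d) (Fin d) ℂ) : Prop :=
  ρ.PosSemidef ∧ ρ.trace = 1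

/-- `(ρ i)_{i=1}^n` is a classical-quantum `ε`-differentially private `n`-tuple. -/
def IsCQDP {n d : ℕ} (ε : ℝ) (ρ : Fin n → Matrix (Fin d) (Fin d) ℂ) : Prop :=
  (∀ i, IsDensityMatrix (ρ i)) ∧ ∀ i j, (Real.exp ε • ρ j - ρ i).PosSemidef

/-- `(ρ i)_{i=1}^n` lies in the essentially classical set `EC_n(ε)`. -/
def InEC {n d : ℕ} (ε : ℝ) (ρ : Fin n → Matrix (Fin d) (Fin d) ℂ) : Prop :=
  ∃ (m : ℕ) (p : Fin n → Fin m → ℝ) (σ : Fin m → Matrix (Fin d) (Fin d) ℂ),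
    IsDP ε p ∧ (∀ k, IsDensityMatrix (σ k)) ∧ ∀ i, ρ i = ∑ k, (p i k : ℂ) • σ k

/-- Quantum RLD Fisher information `J_θ(ρ,σ) = Tr((σ−ρ)²((1−θ)ρ+θσ)⁻¹)`. -/
def Jq {d : ℕ} (θ : ℝ) (ρ σ : Matrix (Fin d) (Fin d) ℂ) : ℝ :=
  (((σ - ρ) ^ 2 * ((1 - θ : ℂ) • ρ + (θ : ℂ) • σ)⁻¹).trace).re

/-- The function `f_θ(α,β) = (α−β)²/((1−θ)α+θβ)`. -/
def fTheta (θ α β : ℝ) : ℝ := (α - β) ^ 2 / ((1 - θ) * α + θ * β)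

/-- `min_{i≠j} J_θ(p_i,p_j)` (classical). -/
def minPairsC {n d : ℕ} (θ : ℝ) (p : Fin n → Fin d → ℝ) : ℝ :=
  ⨅ ij : {q : Fin n × Fin n // q.1 ≠ q.2}, Jc θ (p ij.val.1) (p ij.val.2)

/-- `min_{i≠j} J_θ(ρ_i,ρ_j)` (quantum). -/
def minPairsQ {n d : ℕ} (θ : ℝ) (ρ : Fin n → Matrix (Fin d) (Fin d) ℂ) : ℝ :=
  ⨅ ij : {q : Fin n × Fin n // q.1 ≠ q.2}, Jq θ (ρ ij.val.1) (ρ ij.val.2)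

/-- `avg_{i≠j} J_θ(p_i,p_j)` (classical): arithmetic mean over ordered pairs `i ≠ j`. -/
def avgPairsC {n d : ℕ} (θ : ℝ) (p : Fin n → Fin d → ℝ) : ℝ :=
  (∑ i, ∑ j, if i ≠ j then Jc θ (p i) (p j) else 0) / ((n : ℝ) * ((n : ℝ) - 1))

/-- `avg_{i≠j} J_θ(ρ_i,ρ_j)` (quantum): arithmetic mean over ordered pairs `i ≠ j`. -/
def avgPairsQ {n d : ℕ} (θ : ℝ) (ρ : Fin n → Matrix (Fin d) (Fin d) ℂ) : ℝ :=
  (∑ i, ∑ j, if i ≠ j then Jq θ (ρ i) (ρ j) else 0) / ((n : ℝ) * ((n : ℝ) - 1))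

/-- `M_n^C(ε;J_θ)`: supremum of `min_{i≠j} J_θ(p_i,p_j)` over `ε`-DP `n`-tuples with
positive entries, over all dimensions `d`. -/
def MC (n : ℕ) (ε θ : ℝ) : ℝ :=
  sSup {x : ℝ | ∃ (d : ℕ) (p : Fin n → Fin d → ℝ),
    IsDP ε p ∧ (∀ i k, 0 < p i k) ∧ x = minPairsC θ p}

/-- `M_n^EC(ε;J_θ)`: supremum of `min_{i≠j} J_θ(ρ_i,ρ_j)` over full-rank `n`-tuples in
`EC_n(ε)`, over all dimensions `d`. -/
def MEC (n : ℕ) (ε θ : ℝ) : ℝ :=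
  sSup {x : ℝ | ∃ (d : ℕ) (ρ : Fin n → Matrix (Fin d) (Fin d) ℂ),
    InEC ε ρ ∧ (∀ i, (ρ i).PosDef) ∧ x = minPairsQ θ ρ}

/-- `M_n^CQ(ε;J_θ)`: supremum of `min_{i≠j} J_θ(ρ_i,ρ_j)` over full-rank CQ `ε`-DP
`n`-tuples, over all dimensions `d`. -/
def MCQ (n : ℕ) (ε θ : ℝ) : ℝ :=
  sSup {x : ℝ | ∃ (d : ℕ) (ρ : Fin n → Matrix (Fin d) (Fin d) ℂ),
    IsCQDP ε ρ ∧ (∀ i, (ρ i).PosDef) ∧ x = minPairsQ θ ρ}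

/-- `M_2^C(ε;J_θ)` as the supremum of `J_θ(p,q)` over `ε`-DP pairs with positive entries. -/
def M2C (ε θ : ℝ) : ℝ :=
  sSup {x : ℝ | ∃ (d : ℕ) (p q : Fin d → ℝ),
    IsProbVec p ∧ IsProbVec q ∧ (∀ k, 0 < p k) ∧ (∀ k, 0 < q k) ∧
    (∀ k, p k ≤ Real.exp ε * q k ∧ q k ≤ Real.exp ε * p k) ∧
    x = Jc θ p q}

/-- `max_{1 ≤ k ≤ n/2} k(n−k)/(k e^ε + n − k)`. -/
def maxK (n : ℕ) (ε : ℝ) : ℝ :=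
  sSup {x : ℝ | ∃ k : ℕ, 1 ≤ k ∧ 2 * k ≤ n ∧
    x = ((k : ℝ) * ((n : ℝ) - (k : ℝ))) / ((k : ℝ) * Real.exp ε + (n : ℝ) - (k : ℝ))}

/-!
For `ρ_i = ∑_k p_i(k) σ_k`, put `X = ρ_j - ρ_i`, `M = (1-θ)ρ_i + θρ_j` and `Z = M⁻¹X`. Then
`Tr(X²M⁻¹) = 2 Re Tr(ZᴴX) - Tr(ZᴴMZ)`, and after expanding `X` and `M` along the `σ_k`, the
`k`-th summand is at most `d_k²/c_k` with `d_k = p_j(k) - p_i(k)`, `c_k = (1-θ)p_i(k) + θp_j(k)`,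
by completing the square `Tr(Wᴴσ_k W) ≥ 0` for `W = c_k Z - d_k·1`. Hence
`J_θ(ρ_i,ρ_j) ≤ J_θ(p_i,p_j)`, and the average over pairs of the `J_θ(p_i,p_j)` is at most `M_n^C`:
the tuple `q_i(π,k) = p_{π(i)}(k)/n!`, with `π` ranging over the permutations of the indices and
`k` over the common support of the `p_i`, is `ε`-DP with positive entries, and by 2-transitivity
of the symmetric group each of its pairwise informations equals that average.
-/

section FTheta

lemma Jc_eq_sum_fTheta {d : ℕ} (θ : ℝ) (p q : Fin d → ℝ) :
    Jc θ p q = ∑ k, fTheta θ (p k) (q k) := by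
  simp only [Jc, fTheta, sub_sq_comm]

lemma fTheta_nonneg {θ x y : ℝ} (hθ : θ ∈ Set.Icc (0 : ℝ) 1) (hx : 0 ≤ x) (hy : 0 ≤ y) :
    0 ≤ fTheta θ x y :=
  div_nonneg (sq_nonneg _) (add_nonneg (mul_nonneg (by linarith [hθ.2]) hx) (mul_nonneg hθ.1 hy))

lemma fTheta_div (θ x y : ℝ) {N : ℝ} (hN : N ≠ 0) :
    fTheta θ (x / N) (y / N) = fTheta θ x y / N := by
  rw [fTheta, fTheta, ← sub_div, div_pow, ← mul_div_assoc, ← mul_div_assoc, ← add_div,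
    div_div_div_eq, show N ^ 2 * ((1 - θ) * x + θ * y) = ((1 - θ) * x + θ * y) * N * N by ring,
    mul_div_mul_right _ _ hN, div_div]

lemma fTheta_le {θ x y E : ℝ} (hθ : θ ∈ Set.Icc (0 : ℝ) 1) (hx : 0 < x) (hy : 0 < y)
    (hxy : x ≤ E * y) (hyx : y ≤ E * x) : fTheta θ x y ≤ (E - 1) ^ 2 * x := by
  obtain ⟨hθ0, hθ1⟩ := hθ
  obtain ⟨m, hm, hmx, hmc, hxy', hyx'⟩ : ∃ m, 0 < m ∧ m ≤ x ∧ m ≤ (1 - θ) * x + θ * y ∧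
      x - y ≤ (E - 1) * m ∧ y - x ≤ (E - 1) * m := by
    rcases le_total x y with h | h
    · exact ⟨x, hx, le_rfl, by nlinarith, by linarith, by linarith⟩
    · exact ⟨y, hy, h, by nlinarith, by linarith, by linarith⟩
  have hsq : (x - y) ^ 2 ≤ ((E - 1) * m) ^ 2 := sq_le_sq' (by linarith) hxy'
  rw [fTheta, div_le_iff₀ (by linarith)]
  nlinarith [mul_le_mul hmx hmc hm.le hx.le, sq_nonneg (E - 1)]

end FTheta

section Permutations

open Equiv

lemma Equiv.Perm.exists_apply_eq_and_apply_eq {α : Type*} [DecidableEq α] {i j i' j' : α}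
    (hij : i ≠ j) (hij' : i' ≠ j') : ∃ τ : Perm α, τ i' = i ∧ τ j' = j := by
  have hj' : swap i' i j' ≠ i := fun h =>
    hij' ((swap i' i).injective (h.trans (swap_apply_left _ _).symm)).symm
  refine ⟨swap (swap i' i j') j * swap i' i, ?_, swap_apply_left _ _⟩
  rw [Perm.mul_apply, swap_apply_left]
  exact swap_apply_of_ne_of_ne hj'.symm hij

lemma sum_perm_apply_apply_eq_of_ne {α M : Type*} [DecidableEq α] [Fintype α] [AddCommMonoid M]
    (g : α → α → M) {i j i' j' : α} (hij : i ≠ j) (hij' : i' ≠ j') :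
    ∑ π : Perm α, g (π i) (π j) = ∑ π : Perm α, g (π i') (π j') := by
  obtain ⟨τ, rfl, rfl⟩ := Perm.exists_apply_eq_and_apply_eq hij hij'
  exact Fintype.sum_equiv (Equiv.mulRight τ) _ _ fun _ => rfl

lemma sum_perm_offDiag_comp {α M : Type*} [DecidableEq α] [Fintype α] [AddCommMonoid M]
    (g : α → α → M) (π : Perm α) :
    ∑ a, ∑ b, (if a ≠ b then g (π a) (π b) else 0) = ∑ a, ∑ b, if a ≠ b then g a b else 0 := by
  set H : α → α → M := fun a b => if a ≠ b then g a b else 0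
  calc ∑ a, ∑ b, (if a ≠ b then g (π a) (π b) else 0) = ∑ a, ∑ b, H (π a) (π b) := by
        simp only [H, π.injective.ne_iff]
    _ = ∑ a, ∑ b, H a b := by
        simp only [Equiv.sum_comp π (H (π _)), Equiv.sum_comp π (fun a => ∑ b, H a b)]

lemma sum_ite_ne_const {n : ℕ} (a : Fin n) (S : ℝ) :
    ∑ b : Fin n, (if a ≠ b then S else 0) = ((n : ℝ) - 1) * S := by
  rw [Finset.sum_ite, Finset.sum_const_zero, add_zero, Finset.sum_const, Finset.filter_ne,
    Finset.card_erase_of_mem (Finset.mem_univ _), nsmul_eq_mul, Finset.card_univ, Fintype.card_fin,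
    Nat.cast_pred a.pos]

lemma card_mul_sum_perm_apply_apply {n : ℕ} (g : Fin n → Fin n → ℝ) {i j : Fin n} (hij : i ≠ j) :
    (n : ℝ) * (n - 1) * ∑ π : Perm (Fin n), g (π i) (π j) =
      n.factorial * ∑ a, ∑ b, if a ≠ b then g a b else 0 :=
  calc (n : ℝ) * (n - 1) * ∑ π : Perm (Fin n), g (π i) (π j)
      = ∑ a : Fin n, ∑ b, if a ≠ b then ∑ π : Perm (Fin n), g (π i) (π j) else 0 := by
        simp only [sum_ite_ne_const, Finset.sum_const, Finset.card_univ, Fintype.card_fin,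
          nsmul_eq_mul]
        ring
    _ = ∑ a, ∑ b, ∑ π : Perm (Fin n), if a ≠ b then g (π a) (π b) else 0 := by
        refine Finset.sum_congr rfl fun a _ => Finset.sum_congr rfl fun b _ => ?_
        split_ifs with hab
        · exact sum_perm_apply_apply_eq_of_ne g hij hab
        · simp
    _ = ∑ π : Perm (Fin n), ∑ a, ∑ b, if a ≠ b then g (π a) (π b) else 0 := by
        rw [Finset.sum_congr rfl fun a _ => Finset.sum_comm, Finset.sum_comm]
    _ = n.factorial * ∑ a, ∑ b, if a ≠ b then g a b else 0 := by
        rw [Finset.sum_congr rfl fun π _ => sum_perm_offDiag_comp g π, Finset.sum_const,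
          Finset.card_univ, Fintype.card_perm, Fintype.card_fin, nsmul_eq_mul]

end Permutations

section DifferentialPrivacy

variable {n m : ℕ} {ε θ : ℝ} {p : Fin n → Fin m → ℝ}

lemma IsDP.eq_zero_of_eq_zero (hp : IsDP ε p) {i : Fin n} {k : Fin m} (hik : p i k = 0)
    (j : Fin n) : p j k = 0 :=
  le_antisymm (by simpa [hik] using hp.2 j i k) ((hp.1 j).1 k)

lemma IsDP.eq_of_weighted_eq_zero (hp : IsDP ε p) (hθ : θ ∈ Set.Icc (0 : ℝ) 1) {i j : Fin n}
    {k : Fin m} (h : (1 - θ) * p i k + θ * p j k = 0) : p i k = p j k := by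
  have hi := (hp.1 i).1 k
  have hj := (hp.1 j).1 k
  rcases hθ.2.lt_or_eq with hθ1 | rfl
  · have hik : p i k = 0 := by nlinarith [mul_nonneg hθ.1 hj]
    rw [hik, hp.eq_zero_of_eq_zero hik]
  · have hjk : p j k = 0 := by simpa using h
    rw [hjk, hp.eq_zero_of_eq_zero hjk]

lemma IsDP.sum_support (hp : IsDP ε p) (f : Fin m → ℝ) (hf : ∀ k, (∀ i, p i k = 0) → f k = 0) :
    ∑ k : {k // ∀ i, 0 < p i k}, f k = ∑ k, f k := by
  rw [← Finset.sum_subtype _ fun _ => Finset.mem_filter_univ _]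
  refine Finset.sum_filter_of_ne fun k _ hk => ?_
  by_contra hk'
  obtain ⟨i, hik⟩ := not_forall.1 hk'
  exact hk (hf k (hp.eq_zero_of_eq_zero (le_antisymm (not_lt.1 hik) ((hp.1 i).1 k))))

lemma MC_bddAbove (hn : 2 ≤ n) (hθ : θ ∈ Set.Icc (0 : ℝ) 1) :
    BddAbove {x : ℝ | ∃ (d : ℕ) (p : Fin n → Fin d → ℝ),
      IsDP ε p ∧ (∀ i k, 0 < p i k) ∧ x = minPairsC θ p} := by
  refine ⟨(Real.exp ε - 1) ^ 2, ?_⟩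
  rintro _ ⟨d, p, hp, hpos, rfl⟩
  let i₀ : Fin n := ⟨0, by omega⟩
  let i₁ : Fin n := ⟨1, by omega⟩
  have hbdd : BddBelow (Set.range fun ij : {q : Fin n × Fin n // q.1 ≠ q.2} =>
      Jc θ (p ij.val.1) (p ij.val.2)) := ⟨0, by
    rintro _ ⟨ij, rfl⟩
    dsimp only
    rw [Jc_eq_sum_fTheta]
    exact Finset.sum_nonneg fun k _ => fTheta_nonneg hθ (hpos _ k).le (hpos _ k).le⟩
  calc minPairsC θ p ≤ Jc θ (p i₀) (p i₁) :=
        ciInf_le hbdd ⟨(i₀, i₁), by simp [i₀, i₁, Fin.ext_iff]⟩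
    _ ≤ ∑ k, (Real.exp ε - 1) ^ 2 * p i₀ k := by
        rw [Jc_eq_sum_fTheta]
        exact Finset.sum_le_sum fun k _ =>
          fTheta_le hθ (hpos _ k) (hpos _ k) (hp.2 _ _ k) (hp.2 _ _ k)
    _ = (Real.exp ε - 1) ^ 2 := by rw [← Finset.mul_sum, (hp.1 i₀).2, mul_one]

lemma le_MC (hn : 2 ≤ n) (hθ : θ ∈ Set.Icc (0 : ℝ) 1) {ι : Type*} [Fintype ι]
    (q : Fin n → ι → ℝ) (hpos : ∀ i k, 0 < q i k) (hsum : ∀ i, ∑ k, q i k = 1)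
    (hdp : ∀ i j k, q i k ≤ Real.exp ε * q j k) {c : ℝ}
    (hc : ∀ i j, i ≠ j → ∑ k, fTheta θ (q i k) (q j k) = c) : c ≤ MC n ε θ := by
  let e := Fintype.equivFin ι
  let Q : Fin n → Fin (Fintype.card ι) → ℝ := fun i t => q i (e.symm t)
  have hQ : IsDP ε Q := ⟨fun i => ⟨fun t => (hpos _ _).le, by simp [Q, e.symm.sum_comp, hsum]⟩,
    fun i j t => hdp _ _ _⟩
  have : Nonempty {ij : Fin n × Fin n // ij.1 ≠ ij.2} :=
    ⟨⟨(⟨0, by omega⟩, ⟨1, by omega⟩), by simp [Fin.ext_iff]⟩⟩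
  have hmin : minPairsC θ Q = c := by
    refine (iInf_congr fun ij => ?_).trans ciInf_const
    rw [Jc_eq_sum_fTheta, e.symm.sum_comp (fun k => fTheta θ (q _ k) (q _ k)), hc _ _ ij.2]
  exact le_csSup (MC_bddAbove hn hθ) ⟨_, Q, hQ, fun i t => hpos _ _, hmin.symm⟩

theorem avgPairsC_le_MC (hn : 2 ≤ n) (hθ : θ ∈ Set.Icc (0 : ℝ) 1) (hp : IsDP ε p) :
    avgPairsC θ p ≤ MC n ε θ := by
  have hN : (0 : ℝ) < n.factorial := Nat.cast_pos.2 n.factorial_pos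
  have hsupp : ∀ a b, ∑ k : {k // ∀ i, 0 < p i k}, fTheta θ (p a k) (p b k) = Jc θ (p a) (p b) :=
    fun a b => by
      rw [Jc_eq_sum_fTheta]
      exact hp.sum_support (fun k => fTheta θ (p a k) (p b k)) fun k hk => by simp [hk, fTheta]
  refine le_MC (ι := Equiv.Perm (Fin n) × {k // ∀ i, 0 < p i k}) hn hθ
    (fun i x => p (x.1 i) x.2 / n.factorial) (fun i x => div_pos (x.2.2 _) hN) (fun i => ?_)
    (fun i j x => ?_) (fun i j hij => ?_)
  · have hrow : ∀ a, ∑ k : {k // ∀ i, 0 < p i k}, p a k = 1 :=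
      fun a => (hp.sum_support (p a) fun k hk => hk a).trans (hp.1 a).2
    rw [Fintype.sum_prod_type]
    simp only [← Finset.sum_div, hrow]
    simp [Fintype.card_perm, hN.ne']
  · rw [mul_div_assoc']
    exact div_le_div_of_nonneg_right (hp.2 _ _ _) hN.le
  · simp only [Fintype.sum_prod_type, fTheta_div _ _ _ hN.ne', ← Finset.sum_div, hsupp]
    have hn' : (2 : ℝ) ≤ n := by exact_mod_cast hn
    rw [avgPairsC, div_eq_div_iff hN.ne' (by nlinarith)]
    linear_combination card_mul_sum_perm_apply_apply (fun a b => Jc θ (p a) (p b)) hij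

end DifferentialPrivacy

section Quantum

lemma Matrix.PosSemidef.two_mul_re_trace_sub_le {ι : Type*} [Fintype ι] [DecidableEq ι]
    {σ : Matrix ι ι ℂ} (hσ : σ.PosSemidef) (htr : σ.trace = 1) (Z : Matrix ι ι ℂ) {c d : ℝ}
    (hc : 0 ≤ c) (hcd : c = 0 → d = 0) :
    2 * d * (Zᴴ * σ).trace.re - c * (Zᴴ * σ * Z).trace.re ≤ d ^ 2 / c := by
  rcases hc.eq_or_lt with rfl | hc
  · simp [hcd rfl]
  have hW := Complex.nonneg_iff.1
    (hσ.conjTranspose_mul_mul_same ((c : ℂ) • Z - (d : ℂ) • 1)).trace_nonneg |>.1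
  have hcross : (σ * Z).trace.re = (Zᴴ * σ).trace.re := by
    have h : (Zᴴ * σ)ᴴ = σ * Z := by rw [conjTranspose_mul, conjTranspose_conjTranspose, hσ.1.eq]
    rw [← h, trace_conjTranspose, Complex.star_def, Complex.conj_re]
  have hexpand : (((c : ℂ) • Z - (d : ℂ) • 1)ᴴ * σ * ((c : ℂ) • Z - (d : ℂ) • 1)).trace.re =
      c ^ 2 * (Zᴴ * σ * Z).trace.re - 2 * c * d * (Zᴴ * σ).trace.re + d ^ 2 := by
    simp [conjTranspose_sub, sub_mul, mul_sub, trace_sub, trace_smul, htr, hcross, Matrix.mul_assoc]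
    ring
  rw [le_div_iff₀ hc]
  nlinarith

lemma re_trace_sq_mul_inv_le {d : ℕ} {κ : Type*} [Fintype κ] {σ : κ → Matrix (Fin d) (Fin d) ℂ}
    (hσ : ∀ k, IsDensityMatrix (σ k)) (c δ : κ → ℝ) (hc : ∀ k, 0 ≤ c k)
    (hcδ : ∀ k, c k = 0 → δ k = 0) :
    ((∑ k, (δ k : ℂ) • σ k) ^ 2 * (∑ k, (c k : ℂ) • σ k)⁻¹).trace.re ≤ ∑ k, δ k ^ 2 / c k := by
  have herm : ∀ r : κ → ℝ, (∑ k, (r k : ℂ) • σ k)ᴴ = ∑ k, (r k : ℂ) • σ k := fun r =>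
    isSelfAdjoint_sum _ fun k _ => IsSelfAdjoint.smul (Complex.conj_ofReal (r k)) (hσ k).1.1
  set X := ∑ k, (δ k : ℂ) • σ k
  set M := ∑ k, (c k : ℂ) • σ k
  set Z := M⁻¹ * X
  have hZ : Zᴴ = X * M⁻¹ := by rw [conjTranspose_mul, conjTranspose_nonsing_inv, herm, herm]
  -- `M⁻¹ * M * M⁻¹ = M⁻¹` holds also for singular `M`, where `M⁻¹ = 0`
  have hMinv : M⁻¹ * M * M⁻¹ = M⁻¹ := by
    by_cases hM : IsUnit M.det
    · rw [nonsing_inv_mul _ hM, Matrix.one_mul]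
    · simp [nonsing_inv_apply_not_isUnit _ hM]
  have hZMZ : Zᴴ * M * Z = Zᴴ * X :=
    calc Zᴴ * M * Z = X * (M⁻¹ * M * M⁻¹) * X := by simp only [hZ, Z, Matrix.mul_assoc]
      _ = Zᴴ * X := by rw [hMinv, hZ]
  have hZX : (X ^ 2 * M⁻¹).trace = (Zᴴ * X).trace := by
    rw [hZ, sq, trace_mul_cycle, trace_mul_cycle]
  calc (X ^ 2 * M⁻¹).trace.re = 2 * (Zᴴ * X).trace.re - (Zᴴ * M * Z).trace.re := by
        rw [hZMZ, hZX]; ring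
    _ = ∑ k, (2 * δ k * (Zᴴ * σ k).trace.re - c k * (Zᴴ * σ k * Z).trace.re) := by
        simp only [X, M, Matrix.sum_mul, Matrix.mul_smul, Matrix.smul_mul,
          trace_sum, trace_smul, smul_eq_mul, Complex.re_sum, Complex.re_ofReal_mul,
          Finset.mul_sum, Finset.sum_sub_distrib]
        ring_nf
    _ ≤ ∑ k, δ k ^ 2 / c k := Finset.sum_le_sum fun k _ =>
        (hσ k).1.two_mul_re_trace_sub_le (hσ k).2 Z (hc k) (hcδ k)

lemma Jq_sum_smul_le_Jc {d m : ℕ} {θ : ℝ} (hθ : θ ∈ Set.Icc (0 : ℝ) 1)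
    {σ : Fin m → Matrix (Fin d) (Fin d) ℂ} (hσ : ∀ k, IsDensityMatrix (σ k)) {a b : Fin m → ℝ}
    (ha : ∀ k, 0 ≤ a k) (hb : ∀ k, 0 ≤ b k) (hab : ∀ k, (1 - θ) * a k + θ * b k = 0 → a k = b k) :
    Jq θ (∑ k, (a k : ℂ) • σ k) (∑ k, (b k : ℂ) • σ k) ≤ Jc θ a b := by
  have hX : ∑ k, (b k : ℂ) • σ k - ∑ k, (a k : ℂ) • σ k = ∑ k, ((b k - a k : ℝ) : ℂ) • σ k := by
    simp [← Finset.sum_sub_distrib, sub_smul]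
  have hM : (1 - θ : ℂ) • ∑ k, (a k : ℂ) • σ k + (θ : ℂ) • ∑ k, (b k : ℂ) • σ k =
      ∑ k, (((1 - θ) * a k + θ * b k : ℝ) : ℂ) • σ k := by
    rw [Finset.smul_sum, Finset.smul_sum, ← Finset.sum_add_distrib]
    refine Finset.sum_congr rfl fun k _ => ?_
    rw [smul_smul, smul_smul, ← add_smul]
    push_cast
    ring_nf
  rw [Jq, hX, hM]
  exact re_trace_sq_mul_inv_le hσ _ _
    (fun k => add_nonneg (mul_nonneg (sub_nonneg.2 hθ.2) (ha k)) (mul_nonneg hθ.1 (hb k)))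
    (fun k hk => by rw [hab k hk, sub_self])

end Quantum

lemma avgPairsQ_le_avgPairsC {n d m : ℕ} {θ : ℝ} {ρ : Fin n → Matrix (Fin d) (Fin d) ℂ}
    {p : Fin n → Fin m → ℝ} (h : ∀ i j, Jq θ (ρ i) (ρ j) ≤ Jc θ (p i) (p j)) :
    avgPairsQ θ ρ ≤ avgPairsC θ p := by
  have hden : (0 : ℝ) ≤ n * (n - 1) := by
    rcases n with _ | n
    · simp
    · push_cast
      rw [add_sub_cancel_right]
      positivity
  refine div_le_div_of_nonneg_right
    (Finset.sum_le_sum fun i _ => Finset.sum_le_sum fun j _ => ?_) hden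
  split_ifs
  exacts [h i j, le_rfl]

theorem statement6_general (ε : ℝ) (n : ℕ) (hn : 3 ≤ n)
    (d : ℕ) (ρ : Fin n → Matrix (Fin d) (Fin d) ℂ)
    (h : ∃ θ ∈ Set.Icc (0 : ℝ) 1, MC n ε θ < avgPairsQ θ ρ) :
    ¬ InEC ε ρ := by
  rintro ⟨m, p, σ, hp, hσ, hρ⟩
  obtain ⟨θ, hθ, hlt⟩ := h
  have hJ : ∀ i j, Jq θ (ρ i) (ρ j) ≤ Jc θ (p i) (p j) := fun i j => by
    rw [hρ i, hρ j]
    exact Jq_sum_smul_le_Jc hθ hσ (hp.1 i).1 (hp.1 j).1 fun k => hp.eq_of_weighted_eq_zero hθ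
  exact hlt.not_ge ((avgPairsQ_le_avgPairsC hJ).trans (avgPairsC_le_MC (by omega) hθ hp))

/-- if a full-rank CQ `ε`-DP `n`-tuple `(ρ_i)` satisfies
`M_n^C(ε;J_θ) < avg_{i≠j} J_θ(ρ_i,ρ_j)` for some `θ ∈ [0,1]`, then it is not in `EC_n(ε)`. -/
theorem statement6 (ε : ℝ) (hε : 0 < ε) (n : ℕ) (hn : 3 ≤ n)
    (d : ℕ) (ρ : Fin n → Matrix (Fin d) (Fin d) ℂ)
    (hCQ : IsCQDP ε ρ) (hfull : ∀ i, (ρ i).PosDef)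
    (h : ∃ θ ∈ Set.Icc (0 : ℝ) 1, MC n ε θ < avgPairsQ θ ρ) :
    ¬ InEC ε ρ :=
  statement6_general ε n hn d ρ h

end
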